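/- Suppose that in the Hajós sum G₃ = G₁(x₁y₁) +_H G₂(x₂y₂) of disjoint graphs G₁, G₂ (with x₁, x₂ not pendant), for each i = 1, 2 the graph Gᵢ has a minimum strong dominating set Dᵢ in which xᵢ ∈ Dᵢ and yᵢ is strong dominated by xᵢ (i.e., yᵢ ∉ Dᵢ, xᵢyᵢ ∈ E(Gᵢ), and deg(yᵢ) ≤ deg(xᵢ)). Then γ_st(G₃) ≤ γ_st(G₁) + γ_st(G₂). -/

import Mathlib

/-- Degree of a vertex: number of neighbors. -/
noncomputable def deg {V : Type*} (G : SimpleGraph V) (v : V) : ℕ :=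
  Nat.card (G.neighborSet v)

/-- `D` is a strong dominating set of `G`. -/
def IsStrongDomSet {V : Type*} (G : SimpleGraph V) (D : Set V) : Prop :=
  ∀ x ∉ D, ∃ y ∈ D, G.Adj x y ∧ deg G x ≤ deg G y

/-- `D` is a dominating set of `G`. -/
def IsDomSet {V : Type*} (G : SimpleGraph V) (D : Set V) : Prop :=
  ∀ x ∉ D, ∃ y ∈ D, G.Adj x y

/-- The strong domination number. -/
noncomputable def gammaSt {V : Type*} (G : SimpleGraph V) : ℕ :=
  sInf {n | ∃ D : Set V, IsStrongDomSet G D ∧ D.ncard = n}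

/-- The domination number. -/
noncomputable def gammaDom {V : Type*} (G : SimpleGraph V) : ℕ :=
  sInf {n | ∃ D : Set V, IsDomSet G D ∧ D.ncard = n}

/-- Auxiliary graph on `V₁ ⊕ V₂` for the Hajós sum: delete the edges `x₁y₁`, `x₂y₂`,
redirect edges at `x₂` to `x₁` (which will be the identified vertex), add edge `y₁y₂`. -/
def hajosAux {V₁ V₂ : Type*} (G₁ : SimpleGraph V₁) (G₂ : SimpleGraph V₂)
    (x₁ y₁ : V₁) (x₂ y₂ : V₂) : SimpleGraph (V₁ ⊕ V₂) where
  Adj a b :=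
    match a, b with
    | Sum.inl a, Sum.inl b =>
        G₁.Adj a b ∧ ¬(a = x₁ ∧ b = y₁) ∧ ¬(a = y₁ ∧ b = x₁)
    | Sum.inr a, Sum.inr b =>
        G₂.Adj a b ∧ ¬(a = x₂ ∧ b = y₂) ∧ ¬(a = y₂ ∧ b = x₂)
    | Sum.inl a, Sum.inr b => (a = x₁ ∧ G₂.Adj x₂ b ∧ b ≠ y₂) ∨ (a = y₁ ∧ b = y₂)
    | Sum.inr a, Sum.inl b => (b = x₁ ∧ G₂.Adj x₂ a ∧ a ≠ y₂) ∨ (b = y₁ ∧ a = y₂)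
  symm := by
    constructor
    rintro (a | a) (b | b) h <;> dsimp only at h ⊢
    · exact ⟨h.1.symm, fun hc => h.2.2 ⟨hc.2, hc.1⟩, fun hc => h.2.1 ⟨hc.2, hc.1⟩⟩
    · exact h
    · exact h
    · exact ⟨h.1.symm, fun hc => h.2.2 ⟨hc.2, hc.1⟩, fun hc => h.2.1 ⟨hc.2, hc.1⟩⟩
  loopless := by
    constructor
    rintro (a | a) h <;> dsimp only at h
    · exact G₁.irrefl h.1
    · exact G₂.irrefl h.1

/-- The vertex set of the Hajós sum: everything except `x₂`, which is identified with `x₁`. -/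
def hajosVerts {V₁ V₂ : Type*} (x₂ : V₂) : Set (V₁ ⊕ V₂) := {v | v ≠ Sum.inr x₂}

/-- The Hajós sum `G₁(x₁y₁) +_H G₂(x₂y₂)`. -/
def hajosSum {V₁ V₂ : Type*} (G₁ : SimpleGraph V₁) (G₂ : SimpleGraph V₂)
    (x₁ y₁ : V₁) (x₂ y₂ : V₂) : SimpleGraph (hajosVerts (V₁ := V₁) x₂) :=
  (hajosAux G₁ G₂ x₁ y₁ x₂ y₂).induce (hajosVerts x₂)

/-- The identified vertex `v_H(x₁x₂)` of the Hajós sum. -/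
def hajosVH {V₁ V₂ : Type*} (x₁ : V₁) (x₂ : V₂) : hajosVerts (V₁ := V₁) (V₂ := V₂) x₂ :=
  ⟨Sum.inl x₁, by simp [hajosVerts]⟩


section Aux
set_option linter.unusedSectionVars false
open Sum
variable {V₁ V₂ : Type*} [Fintype V₁] [Fintype V₂]
  (G₁ : SimpleGraph V₁) (G₂ : SimpleGraph V₂) (x₁ y₁ : V₁) (x₂ y₂ : V₂)

lemma aux_adj_ll (a b : V₁) : (hajosAux G₁ G₂ x₁ y₁ x₂ y₂).Adj (inl a) (inl b) ↔
    G₁.Adj a b ∧ ¬(a = x₁ ∧ b = y₁) ∧ ¬(a = y₁ ∧ b = x₁) := Iff.rfl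

lemma aux_adj_rr (a b : V₂) : (hajosAux G₁ G₂ x₁ y₁ x₂ y₂).Adj (inr a) (inr b) ↔
    G₂.Adj a b ∧ ¬(a = x₂ ∧ b = y₂) ∧ ¬(a = y₂ ∧ b = x₂) := Iff.rfl

lemma aux_adj_lr (a : V₁) (b : V₂) : (hajosAux G₁ G₂ x₁ y₁ x₂ y₂).Adj (inl a) (inr b) ↔
    (a = x₁ ∧ G₂.Adj x₂ b ∧ b ≠ y₂) ∨ (a = y₁ ∧ b = y₂) := Iff.rfl

lemma aux_adj_rl (a : V₂) (b : V₁) : (hajosAux G₁ G₂ x₁ y₁ x₂ y₂).Adj (inr a) (inl b) ↔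
    (b = x₁ ∧ G₂.Adj x₂ a ∧ a ≠ y₂) ∨ (b = y₁ ∧ a = y₂) := Iff.rfl

lemma deg_hajos (s : hajosVerts (V₁ := V₁) x₂) :
    deg (hajosSum G₁ G₂ x₁ y₁ x₂ y₂) s =
    ({w | (hajosAux G₁ G₂ x₁ y₁ x₂ y₂).Adj s.1 w} ∩ hajosVerts x₂).ncard := by
  have h1 : (hajosSum G₁ G₂ x₁ y₁ x₂ y₂).neighborSet s =
      Subtype.val ⁻¹' {w | (hajosAux G₁ G₂ x₁ y₁ x₂ y₂).Adj s.1 w} := by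
    ext b; rfl
  have : deg (hajosSum G₁ G₂ x₁ y₁ x₂ y₂) s =
      ((hajosSum G₁ G₂ x₁ y₁ x₂ y₂).neighborSet s).ncard := rfl
  rw [this, h1, ← Set.ncard_image_of_injective _ Subtype.val_injective,
    Subtype.image_preimage_coe, Set.inter_comm]

lemma deg_inl_of_ne (u : V₁) (hu1 : u ≠ x₁) (hu2 : u ≠ y₁) (hs : (Sum.inl u : V₁ ⊕ V₂) ∈ hajosVerts x₂) :
    deg (hajosSum G₁ G₂ x₁ y₁ x₂ y₂) ⟨inl u, hs⟩ = deg G₁ u := by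
  rw [deg_hajos]
  have : ({w | (hajosAux G₁ G₂ x₁ y₁ x₂ y₂).Adj (inl u) w} ∩ hajosVerts x₂)
      = Sum.inl '' (G₁.neighborSet u) := by
    ext (b | b) <;>
      simp [aux_adj_ll, aux_adj_lr, hajosVerts, hu1, hu2, SimpleGraph.neighborSet]
  rw [this, Set.ncard_image_of_injective _ Sum.inl_injective]; rfl


lemma deg_inl_y₁' (he₁ : G₁.Adj x₁ y₁) (he₂ : G₂.Adj x₂ y₂)
    (hs : (Sum.inl y₁ : V₁ ⊕ V₂) ∈ hajosVerts x₂) :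
    deg (hajosSum G₁ G₂ x₁ y₁ x₂ y₂) ⟨inl y₁, hs⟩ = deg G₁ y₁ := by
  have hne : y₁ ≠ x₁ := fun h => G₁.loopless.irrefl x₁ (h ▸ he₁)
  have hne2 : y₂ ≠ x₂ := he₂.ne'
  rw [deg_hajos]
  have : ({w | (hajosAux G₁ G₂ x₁ y₁ x₂ y₂).Adj (inl y₁) w} ∩ hajosVerts x₂)
      = insert (inr y₂) (Sum.inl '' (G₁.neighborSet y₁ \ {x₁})) := by
    ext (b | b) <;>
      simp [aux_adj_ll, aux_adj_lr, hajosVerts, hne, hne2, SimpleGraph.neighborSet, and_comm] <;>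
      aesop
  rw [this, Set.ncard_insert_of_notMem (by simp) (Set.toFinite _),
    Set.ncard_image_of_injective _ Sum.inl_injective,
    Set.ncard_diff_singleton_add_one (by exact he₁.symm) (Set.toFinite _)]
  rfl

lemma deg_inl_x₁' (he₁ : G₁.Adj x₁ y₁) (he₂ : G₂.Adj x₂ y₂)
    (hx₁ : deg G₁ x₁ ≠ 1) (hx₂ : deg G₂ x₂ ≠ 1)
    (hs : (Sum.inl x₁ : V₁ ⊕ V₂) ∈ hajosVerts x₂) :
    deg G₁ x₁ ≤ deg (hajosSum G₁ G₂ x₁ y₁ x₂ y₂) ⟨inl x₁, hs⟩ ∧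
    deg G₂ x₂ ≤ deg (hajosSum G₁ G₂ x₁ y₁ x₂ y₂) ⟨inl x₁, hs⟩ := by
  have hne : x₁ ≠ y₁ := he₁.ne
  have hne2 : x₂ ≠ y₂ := he₂.ne
  rw [deg_hajos]
  have : ({w | (hajosAux G₁ G₂ x₁ y₁ x₂ y₂).Adj (inl x₁) w} ∩ hajosVerts x₂)
      = Sum.inl '' (G₁.neighborSet x₁ \ {y₁}) ∪ Sum.inr '' (G₂.neighborSet x₂ \ {y₂}) := by
    have hax : ∀ c, G₂.Adj x₂ c → ¬ c = x₂ := fun c h e => G₂.loopless.irrefl x₂ (e ▸ h)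
    ext (b | b) <;>
      simp [aux_adj_ll, aux_adj_lr, hajosVerts, hne, hne2, SimpleGraph.neighborSet, and_comm] <;>
      aesop
  rw [this, Set.ncard_union_eq (Set.disjoint_left.mpr (by rintro t ⟨a, -, rfl⟩ ⟨b, -, h⟩; simp at h))
    (Set.toFinite _) (Set.toFinite _),
    Set.ncard_image_of_injective _ Sum.inl_injective,
    Set.ncard_image_of_injective _ Sum.inr_injective]
  have h1 : (G₁.neighborSet x₁ \ {y₁}).ncard + 1 = deg G₁ x₁ :=
    Set.ncard_diff_singleton_add_one (by exact he₁) (Set.toFinite _)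
  have h2 : (G₂.neighborSet x₂ \ {y₂}).ncard + 1 = deg G₂ x₂ :=
    Set.ncard_diff_singleton_add_one (by exact he₂) (Set.toFinite _)
  omega

lemma deg_inr_of_ne (w : V₂) (hw1 : w ≠ x₂) (hw2 : w ≠ y₂)
    (hs : (Sum.inr w : V₁ ⊕ V₂) ∈ hajosVerts x₂) :
    deg (hajosSum G₁ G₂ x₁ y₁ x₂ y₂) ⟨inr w, hs⟩ = deg G₂ w := by
  rw [deg_hajos]
  by_cases ha : G₂.Adj x₂ w
  · have : ({v | (hajosAux G₁ G₂ x₁ y₁ x₂ y₂).Adj (inr w) v} ∩ hajosVerts x₂)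
        = insert (inl x₁) (Sum.inr '' (G₂.neighborSet w \ {x₂})) := by
      ext (b | b) <;>
        simp [aux_adj_rl, aux_adj_rr, hajosVerts, hw1, hw2, ha, SimpleGraph.neighborSet,
          and_comm] <;> aesop
    rw [this, Set.ncard_insert_of_notMem (by simp) (Set.toFinite _),
      Set.ncard_image_of_injective _ Sum.inr_injective,
      Set.ncard_diff_singleton_add_one (by exact ha.symm) (Set.toFinite _)]
    rfl
  · have : ({v | (hajosAux G₁ G₂ x₁ y₁ x₂ y₂).Adj (inr w) v} ∩ hajosVerts x₂)
        = Sum.inr '' (G₂.neighborSet w) := by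
      have hx : x₂ ∉ G₂.neighborSet w := fun h => ha (SimpleGraph.Adj.symm h)
      ext (b | b) <;>
        simp [aux_adj_rl, aux_adj_rr, hajosVerts, hw1, hw2, ha, SimpleGraph.neighborSet,
          and_comm] <;> aesop
    rw [this, Set.ncard_image_of_injective _ Sum.inr_injective]
    rfl

lemma deg_inr_y₂' (he₂ : G₂.Adj x₂ y₂) (hs : (Sum.inr y₂ : V₁ ⊕ V₂) ∈ hajosVerts x₂) :
    deg (hajosSum G₁ G₂ x₁ y₁ x₂ y₂) ⟨inr y₂, hs⟩ = deg G₂ y₂ := by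
  have hne : y₂ ≠ x₂ := he₂.ne'
  rw [deg_hajos]
  have : ({v | (hajosAux G₁ G₂ x₁ y₁ x₂ y₂).Adj (inr y₂) v} ∩ hajosVerts x₂)
      = insert (inl y₁) (Sum.inr '' (G₂.neighborSet y₂ \ {x₂})) := by
    ext (b | b) <;>
      simp [aux_adj_rl, aux_adj_rr, hajosVerts, hne, SimpleGraph.neighborSet, and_comm] <;>
      aesop
  rw [this, Set.ncard_insert_of_notMem (by simp) (Set.toFinite _),
    Set.ncard_image_of_injective _ Sum.inr_injective,
    Set.ncard_diff_singleton_add_one (by exact he₂.symm) (Set.toFinite _)]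
  rfl

lemma hajos_adj (a b : hajosVerts (V₁ := V₁) x₂) :
    (hajosSum G₁ G₂ x₁ y₁ x₂ y₂).Adj a b ↔ (hajosAux G₁ G₂ x₁ y₁ x₂ y₂).Adj a.1 b.1 :=
  Iff.rfl

lemma dom_inl (he₁ : G₁.Adj x₁ y₁) (he₂ : G₂.Adj x₂ y₂)
    (hx₁ : deg G₁ x₁ ≠ 1) (hx₂ : deg G₂ x₂ ≠ 1)
    (D₁ : Set V₁) (hD₁ : IsStrongDomSet G₁ D₁) (hx₁D : x₁ ∈ D₁) (hy₁D : y₁ ∉ D₁)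
    (u : V₁) (huD : u ∉ D₁) (huy : u ≠ y₁) (hs : (Sum.inl u : V₁ ⊕ V₂) ∈ hajosVerts x₂) :
    ∃ t : hajosVerts (V₁ := V₁) x₂, (∃ d ∈ D₁, t.1 = inl d) ∧
      (hajosSum G₁ G₂ x₁ y₁ x₂ y₂).Adj ⟨inl u, hs⟩ t ∧
      deg (hajosSum G₁ G₂ x₁ y₁ x₂ y₂) ⟨inl u, hs⟩ ≤ deg (hajosSum G₁ G₂ x₁ y₁ x₂ y₂) t := by
  have hvx₁ : (Sum.inl x₁ : V₁ ⊕ V₂) ∈ hajosVerts x₂ := by simp [hajosVerts]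
  have hune_x₁ : u ≠ x₁ := fun e => huD (e ▸ hx₁D)
  obtain ⟨y, hyD, hadj, hdeg⟩ := hD₁ u huD
  have hyne_y₁ : y ≠ y₁ := fun e => hy₁D (e ▸ hyD)
  by_cases hyx : y = x₁
  · refine ⟨⟨inl x₁, hvx₁⟩, ⟨x₁, hx₁D, rfl⟩, ?_, ?_⟩
    · rw [hajos_adj, aux_adj_ll]
      exact ⟨hyx ▸ hadj, fun h => hune_x₁ h.1, fun h => huy h.1⟩
    · rw [deg_inl_of_ne G₁ G₂ x₁ y₁ x₂ y₂ u hune_x₁ huy hs]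
      exact le_trans (hyx ▸ hdeg) (deg_inl_x₁' G₁ G₂ x₁ y₁ x₂ y₂ he₁ he₂ hx₁ hx₂ hvx₁).1
  · refine ⟨⟨inl y, by simp [hajosVerts]⟩, ⟨y, hyD, rfl⟩, ?_, ?_⟩
    · rw [hajos_adj, aux_adj_ll]
      exact ⟨hadj, fun h => hune_x₁ h.1, fun h => huy h.1⟩
    · rw [deg_inl_of_ne G₁ G₂ x₁ y₁ x₂ y₂ u hune_x₁ huy hs]
      exact hdeg.trans_eq (deg_inl_of_ne G₁ G₂ x₁ y₁ x₂ y₂ y hyx hyne_y₁ _).symm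

lemma dom_inr (he₁ : G₁.Adj x₁ y₁) (he₂ : G₂.Adj x₂ y₂)
    (hx₁ : deg G₁ x₁ ≠ 1) (hx₂ : deg G₂ x₂ ≠ 1)
    (D₂ : Set V₂) (hD₂ : IsStrongDomSet G₂ D₂) (hx₂D : x₂ ∈ D₂) (hy₂D : y₂ ∉ D₂)
    (v : V₂) (hvD : v ∉ D₂) (hvx : v ≠ x₂) (hvy : v ≠ y₂)
    (hs : (Sum.inr v : V₁ ⊕ V₂) ∈ hajosVerts x₂) :
    ∃ t : hajosVerts (V₁ := V₁) x₂, ((∃ d ∈ D₂, d ≠ x₂ ∧ t.1 = inr d) ∨ t.1 = inl x₁) ∧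
      (hajosSum G₁ G₂ x₁ y₁ x₂ y₂).Adj ⟨inr v, hs⟩ t ∧
      deg (hajosSum G₁ G₂ x₁ y₁ x₂ y₂) ⟨inr v, hs⟩ ≤ deg (hajosSum G₁ G₂ x₁ y₁ x₂ y₂) t := by
  have hvx₁ : (Sum.inl x₁ : V₁ ⊕ V₂) ∈ hajosVerts x₂ := by simp [hajosVerts]
  obtain ⟨y, hyD, hadj, hdeg⟩ := hD₂ v hvD
  have hyne_y₂ : y ≠ y₂ := fun e => hy₂D (e ▸ hyD)
  by_cases hyx : y = x₂
  · refine ⟨⟨inl x₁, hvx₁⟩, Or.inr rfl, ?_, ?_⟩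
    · rw [hajos_adj, aux_adj_rl]
      exact Or.inl ⟨rfl, hyx ▸ hadj.symm, hvy⟩
    · rw [deg_inr_of_ne G₁ G₂ x₁ y₁ x₂ y₂ v hvx hvy hs]
      exact le_trans (hyx ▸ hdeg) (deg_inl_x₁' G₁ G₂ x₁ y₁ x₂ y₂ he₁ he₂ hx₁ hx₂ hvx₁).2
  · refine ⟨⟨inr y, by simp [hajosVerts, hyx]⟩, Or.inl ⟨y, hyD, hyx, rfl⟩, ?_, ?_⟩
    · rw [hajos_adj, aux_adj_rr]
      exact ⟨hadj, fun h => hvx h.1, fun h => hvy h.1⟩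
    · rw [deg_inr_of_ne G₁ G₂ x₁ y₁ x₂ y₂ v hvx hvy hs]
      exact hdeg.trans_eq (deg_inr_of_ne G₁ G₂ x₁ y₁ x₂ y₂ y hyx hyne_y₂ _).symm

lemma ncard_preimage_verts (A : Set (V₁ ⊕ V₂)) (hA : A ⊆ hajosVerts (V₁ := V₁) x₂) :
    (Subtype.val ⁻¹' A : Set (hajosVerts (V₁ := V₁) x₂)).ncard = A.ncard := by
  rw [← Set.ncard_image_of_injective _ Subtype.val_injective, Subtype.image_preimage_coe,
    Set.inter_eq_self_of_subset_right hA]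

end Aux

theorem stmt8' {V₁ V₂ : Type*} [Fintype V₁] [Fintype V₂]
    (G₁ : SimpleGraph V₁) (G₂ : SimpleGraph V₂) (x₁ y₁ : V₁) (x₂ y₂ : V₂)
    (he₁ : G₁.Adj x₁ y₁) (he₂ : G₂.Adj x₂ y₂)
    (hx₁ : deg G₁ x₁ ≠ 1) (hx₂ : deg G₂ x₂ ≠ 1)
    (D₁ : Set V₁) (hD₁ : IsStrongDomSet G₁ D₁) (hD₁min : D₁.ncard = gammaSt G₁)
    (hx₁D : x₁ ∈ D₁) (hy₁D : y₁ ∉ D₁) (hdy₁ : deg G₁ y₁ ≤ deg G₁ x₁)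
    (D₂ : Set V₂) (hD₂ : IsStrongDomSet G₂ D₂) (hD₂min : D₂.ncard = gammaSt G₂)
    (hx₂D : x₂ ∈ D₂) (hy₂D : y₂ ∉ D₂) (hdy₂ : deg G₂ y₂ ≤ deg G₂ x₂) :
    gammaSt (hajosSum G₁ G₂ x₁ y₁ x₂ y₂) ≤ gammaSt G₁ + gammaSt G₂ := by
  classical
  open Sum in
  have hvx₁ : (Sum.inl x₁ : V₁ ⊕ V₂) ∈ hajosVerts x₂ := by simp [hajosVerts]
  have hxy₂ : y₂ ≠ x₂ := he₂.ne'
  suffices h : ∃ D₃ : Set (hajosVerts (V₁ := V₁) x₂),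
      IsStrongDomSet (hajosSum G₁ G₂ x₁ y₁ x₂ y₂) D₃ ∧ D₃.ncard ≤ D₁.ncard + D₂.ncard by
    obtain ⟨D₃, hdom, hcard⟩ := h
    have : gammaSt (hajosSum G₁ G₂ x₁ y₁ x₂ y₂) ≤ D₃.ncard :=
      Nat.sInf_le (show ∃ D, IsStrongDomSet (hajosSum G₁ G₂ x₁ y₁ x₂ y₂) D ∧ D.ncard = D₃.ncard
        from ⟨D₃, hdom, rfl⟩)
    rw [hD₁min, hD₂min] at hcard
    exact le_trans this hcard
  have hd2card : (D₂ \ {x₂}).ncard + 1 = D₂.ncard :=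
    Set.ncard_diff_singleton_add_one hx₂D (Set.toFinite _)
  rcases le_total (deg G₂ y₂) (deg G₁ y₁) with hcmp | hcmp
  · -- D₃ = inl '' (insert y₁ D₁) ∪ inr '' (D₂ \ {x₂})
    set A : Set (V₁ ⊕ V₂) := Sum.inl '' (insert y₁ D₁) ∪ Sum.inr '' (D₂ \ {x₂}) with hAdef
    have hAsub : A ⊆ hajosVerts (V₁ := V₁) x₂ := by
      rintro w (⟨a, -, rfl⟩ | ⟨a, ⟨-, hax⟩, rfl⟩)
      · simp [hajosVerts]
      · simp only [hajosVerts, Set.mem_setOf_eq, ne_eq, Sum.inr.injEq]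
        simpa using hax
    refine ⟨Subtype.val ⁻¹' A, ?_, ?_⟩
    · rintro ⟨(u | v), hs⟩ hmem
      · have huD : u ∉ D₁ := fun h => hmem (Or.inl ⟨u, Set.mem_insert_of_mem _ h, rfl⟩)
        have huy : u ≠ y₁ := fun h => hmem (Or.inl ⟨u, h ▸ Set.mem_insert _ _, rfl⟩)
        obtain ⟨t, ⟨d, hd, ht⟩, hadj, hdeg⟩ :=
          dom_inl G₁ G₂ x₁ y₁ x₂ y₂ he₁ he₂ hx₁ hx₂ D₁ hD₁ hx₁D hy₁D u huD huy hs
        exact ⟨t, Or.inl ⟨d, Set.mem_insert_of_mem _ hd, ht.symm⟩, hadj, hdeg⟩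
      · have hvx : v ≠ x₂ := by simpa [hajosVerts] using hs
        have hvD : v ∉ D₂ := fun h => hmem (Or.inr ⟨v, ⟨h, hvx⟩, rfl⟩)
        by_cases hvy : v = y₂
        · subst hvy
          refine ⟨⟨Sum.inl y₁, by simp [hajosVerts]⟩, Or.inl ⟨y₁, Set.mem_insert _ _, rfl⟩, ?_, ?_⟩
          · rw [hajos_adj, aux_adj_rl]
            exact Or.inr ⟨rfl, rfl⟩
          · rw [deg_inr_y₂' G₁ G₂ x₁ y₁ x₂ v he₂ hs,
              deg_inl_y₁' G₁ G₂ x₁ y₁ x₂ v he₁ he₂ (by simp [hajosVerts])]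
            exact hcmp
        · obtain ⟨t, hmem', hadj, hdeg⟩ :=
            dom_inr G₁ G₂ x₁ y₁ x₂ y₂ he₁ he₂ hx₁ hx₂ D₂ hD₂ hx₂D hy₂D v hvD hvx hvy hs
          refine ⟨t, ?_, hadj, hdeg⟩
          rcases hmem' with ⟨d, hd, hdx, ht⟩ | ht
          · exact Or.inr ⟨d, ⟨hd, hdx⟩, ht.symm⟩
          · exact Or.inl ⟨x₁, Set.mem_insert_of_mem _ hx₁D, ht.symm⟩
    · rw [ncard_preimage_verts x₂ A hAsub, hAdef,
        Set.ncard_union_eq (Set.disjoint_left.mpr (by rintro w ⟨a, -, rfl⟩ ⟨b, -, h⟩; simp at h))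
          (Set.toFinite _) (Set.toFinite _),
        Set.ncard_image_of_injective _ Sum.inl_injective,
        Set.ncard_image_of_injective _ Sum.inr_injective,
        Set.ncard_insert_of_notMem hy₁D (Set.toFinite _)]
      omega
  · -- D₃ = inl '' D₁ ∪ inr '' (insert y₂ (D₂ \ {x₂}))
    set A : Set (V₁ ⊕ V₂) := Sum.inl '' D₁ ∪ Sum.inr '' (insert y₂ (D₂ \ {x₂})) with hAdef
    have hAsub : A ⊆ hajosVerts (V₁ := V₁) x₂ := by
      rintro w (⟨a, -, rfl⟩ | ⟨a, ha, rfl⟩)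
      · simp [hajosVerts]
      · rcases ha with rfl | ⟨-, hax⟩
        · simp [hajosVerts, hxy₂]
        · simp only [hajosVerts, Set.mem_setOf_eq, ne_eq, Sum.inr.injEq]
          simpa using hax
    refine ⟨Subtype.val ⁻¹' A, ?_, ?_⟩
    · rintro ⟨(u | v), hs⟩ hmem
      · have huD : u ∉ D₁ := fun h => hmem (Or.inl ⟨u, h, rfl⟩)
        by_cases huy : u = y₁
        · subst huy
          refine ⟨⟨Sum.inr y₂, by simp [hajosVerts, hxy₂]⟩,
            Or.inr ⟨y₂, Set.mem_insert _ _, rfl⟩, ?_, ?_⟩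
          · rw [hajos_adj, aux_adj_lr]
            exact Or.inr ⟨rfl, rfl⟩
          · rw [deg_inl_y₁' G₁ G₂ x₁ u x₂ y₂ he₁ he₂ hs,
              deg_inr_y₂' G₁ G₂ x₁ u x₂ y₂ he₂ (by simp [hajosVerts, hxy₂])]
            exact hcmp
        · obtain ⟨t, ⟨d, hd, ht⟩, hadj, hdeg⟩ :=
            dom_inl G₁ G₂ x₁ y₁ x₂ y₂ he₁ he₂ hx₁ hx₂ D₁ hD₁ hx₁D hy₁D u huD huy hs
          exact ⟨t, Or.inl ⟨d, hd, ht.symm⟩, hadj, hdeg⟩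
      · have hvx : v ≠ x₂ := by simpa [hajosVerts] using hs
        have hvy : v ≠ y₂ := fun h => hmem (Or.inr ⟨v, h ▸ Set.mem_insert _ _, rfl⟩)
        have hvD : v ∉ D₂ := fun h =>
          hmem (Or.inr ⟨v, Set.mem_insert_of_mem _ ⟨h, hvx⟩, rfl⟩)
        obtain ⟨t, hmem', hadj, hdeg⟩ :=
          dom_inr G₁ G₂ x₁ y₁ x₂ y₂ he₁ he₂ hx₁ hx₂ D₂ hD₂ hx₂D hy₂D v hvD hvx hvy hs
        refine ⟨t, ?_, hadj, hdeg⟩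
        rcases hmem' with ⟨d, hd, hdx, ht⟩ | ht
        · exact Or.inr ⟨d, Set.mem_insert_of_mem _ ⟨hd, hdx⟩, ht.symm⟩
        · exact Or.inl ⟨x₁, hx₁D, ht.symm⟩
    · rw [ncard_preimage_verts x₂ A hAsub, hAdef,
        Set.ncard_union_eq (Set.disjoint_left.mpr (by rintro w ⟨a, -, rfl⟩ ⟨b, -, h⟩; simp at h))
          (Set.toFinite _) (Set.toFinite _),
        Set.ncard_image_of_injective _ Sum.inl_injective,
        Set.ncard_image_of_injective _ Sum.inr_injective,
        Set.ncard_insert_of_notMem (fun h => hy₂D h.1) (Set.toFinite _)]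
      omega


/-- If each `Gᵢ` has a minimum strong dominating set `Dᵢ` with `xᵢ ∈ Dᵢ` and `yᵢ`
strong dominated by `xᵢ`, then `γ_st(G₃) ≤ γ_st(G₁) + γ_st(G₂)`. -/
theorem stmt8 {V₁ V₂ : Type*} [Fintype V₁] [Fintype V₂]
    (G₁ : SimpleGraph V₁) (G₂ : SimpleGraph V₂) (x₁ y₁ : V₁) (x₂ y₂ : V₂)
    (he₁ : G₁.Adj x₁ y₁) (he₂ : G₂.Adj x₂ y₂)
    (hx₁ : deg G₁ x₁ ≠ 1) (hx₂ : deg G₂ x₂ ≠ 1)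
    (D₁ : Set V₁) (hD₁ : IsStrongDomSet G₁ D₁) (hD₁min : D₁.ncard = gammaSt G₁)
    (hx₁D : x₁ ∈ D₁) (hy₁D : y₁ ∉ D₁) (hdy₁ : deg G₁ y₁ ≤ deg G₁ x₁)
    (D₂ : Set V₂) (hD₂ : IsStrongDomSet G₂ D₂) (hD₂min : D₂.ncard = gammaSt G₂)
    (hx₂D : x₂ ∈ D₂) (hy₂D : y₂ ∉ D₂) (hdy₂ : deg G₂ y₂ ≤ deg G₂ x₂) :
    gammaSt (hajosSum G₁ G₂ x₁ y₁ x₂ y₂) ≤ gammaSt G₁ + gammaSt G₂ :=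
  stmt8' G₁ G₂ x₁ y₁ x₂ y₂ he₁ he₂ hx₁ hx₂ D₁ hD₁ hD₁min hx₁D hy₁D hdy₁
    D₂ hD₂ hD₂min hx₂D hy₂D hdy₂
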